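/- Let s ∈ [0,1) and let V ∈ L¹(ℝ²) be real-valued and satisfy conditions (V_ln_s) and (V_roll). Then as α → 0+, ∫_{ℝ²×ℝ²} |V(x)|·|G(x,y;α) − g(α)|·|V(y)| d(x,y) = o(|ln α|^{1−s}). -/

import Mathlib

open MeasureTheory Filter Asymptotics Set
open scoped ENNReal NNReal
set_option maxHeartbeats 1000000

/-- The modified Bessel function of the second kind of order zero,
via its integral representation `K₀(w) = ∫₀^∞ exp(−w·cosh t) dt`. -/
noncomputable def K0 (w : ℝ) : ℝ := ∫ t in Set.Ioi (0 : ℝ), Real.exp (-w * Real.cosh t)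


lemma cosh_lb {t : ℝ} (ht : 0 ≤ t) : (1 + t) / 2 ≤ Real.cosh t := by
  have h1 : Real.exp t / 2 ≤ Real.cosh t := by
    rw [Real.cosh_eq]
    have := (Real.exp_pos (-t)).le
    linarith
  have h2 : 1 + t ≤ Real.exp t := by have := Real.add_one_le_exp t; linarith
  linarith

lemma cosh_ub {t : ℝ} (ht : 0 ≤ t) : Real.cosh t ≤ Real.exp t := by
  rw [Real.cosh_eq]
  have := Real.exp_le_exp.2 (neg_le_self ht)
  linarith

lemma exp_half_lb {t : ℝ} (ht : 0 ≤ t) : Real.exp t / 2 ≤ Real.cosh t := by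
  rw [Real.cosh_eq]
  have := (Real.exp_pos (-t)).le
  linarith

lemma K0_integrableOn {w : ℝ} (hw : 0 < w) :
    IntegrableOn (fun t => Real.exp (-w * Real.cosh t)) (Set.Ioi 0) := by
  apply Integrable.mono' (((exp_neg_integrableOn_Ioi 0 (half_pos hw)).const_mul
    (Real.exp (-(w / 2)))))
  · exact (Real.continuous_exp.comp ((continuous_const.mul Real.continuous_cosh))).aestronglyMeasurable
  · filter_upwards [self_mem_ae_restrict measurableSet_Ioi] with t ht
    have ht0 : (0:ℝ) ≤ t := le_of_lt ht
    rw [Real.norm_eq_abs, abs_of_pos (Real.exp_pos _), ← Real.exp_add]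
    apply Real.exp_le_exp.2
    have := cosh_lb ht0
    nlinarith

lemma K0_nonneg (w : ℝ) : 0 ≤ K0 w :=
  integral_nonneg fun t => (Real.exp_pos _).le

lemma aux_integrableOn_exp_exp {c : ℝ} (hc : 0 < c) :
    IntegrableOn (fun t => Real.exp (-(c * Real.exp t))) (Set.Ioi 0) := by
  apply Integrable.mono' (((exp_neg_integrableOn_Ioi 0 hc).const_mul (Real.exp (-c))))
  · exact (Real.continuous_exp.comp ((continuous_const.mul Real.continuous_exp).neg)).aestronglyMeasurable
  · filter_upwards [self_mem_ae_restrict measurableSet_Ioi] with t ht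
    have ht0 : (0:ℝ) ≤ t := le_of_lt ht
    rw [Real.norm_eq_abs, abs_of_pos (Real.exp_pos _), ← Real.exp_add]
    apply Real.exp_le_exp.2
    have h2 : 1 + t ≤ Real.exp t := by have := Real.add_one_le_exp t; linarith
    nlinarith

lemma K0_le {w : ℝ} (h0 : 0 < w) (h2 : w ≤ 2) : K0 w ≤ -Real.log w + 2 := by
  have hw2 : 0 < w / 2 := half_pos h0
  set t₀ := Real.log (2 / w) with ht₀def
  have ht₀ : 0 ≤ t₀ := Real.log_nonneg (by rw [le_div_iff₀ h0]; linarith)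
  have step1 : K0 w ≤ ∫ t in Set.Ioi (0:ℝ), Real.exp (-(w / 2 * Real.exp t)) := by
    apply setIntegral_mono_on (K0_integrableOn h0) (aux_integrableOn_exp_exp hw2)
      measurableSet_Ioi
    intro t ht
    apply Real.exp_le_exp.2
    have := exp_half_lb (le_of_lt ht)
    nlinarith
  have hsplit : Set.Ioc (0:ℝ) t₀ ∪ Set.Ioi t₀ = Set.Ioi 0 := Set.Ioc_union_Ioi_eq_Ioi ht₀
  have hdisj : Disjoint (Set.Ioc (0:ℝ) t₀) (Set.Ioi t₀) := Set.Ioc_disjoint_Ioi le_rfl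
  have hint : IntegrableOn (fun t => Real.exp (-(w / 2 * Real.exp t))) (Set.Ioi 0) :=
    aux_integrableOn_exp_exp hw2
  have hsum : ∫ t in Set.Ioi (0:ℝ), Real.exp (-(w / 2 * Real.exp t))
      = (∫ t in Set.Ioc (0:ℝ) t₀, Real.exp (-(w / 2 * Real.exp t)))
        + ∫ t in Set.Ioi t₀, Real.exp (-(w / 2 * Real.exp t)) := by
    rw [← hsplit]
    exact setIntegral_union hdisj measurableSet_Ioi
      (hint.mono_set (by rw [← hsplit]; exact Set.subset_union_left))
      (hint.mono_set (by rw [← hsplit]; exact Set.subset_union_right))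
  have hpart1 : (∫ t in Set.Ioc (0:ℝ) t₀, Real.exp (-(w / 2 * Real.exp t))) ≤ t₀ := by
    have hb : (∫ t in Set.Ioc (0:ℝ) t₀, Real.exp (-(w / 2 * Real.exp t)))
        ≤ ∫ _t in Set.Ioc (0:ℝ) t₀, (1:ℝ) := by
      apply setIntegral_mono_on (hint.mono_set (by rw [← hsplit]; exact Set.subset_union_left))
        (integrableOn_const (by rw [Real.volume_Ioc]; exact ENNReal.ofReal_ne_top) enorm_ne_top)
        measurableSet_Ioc
      intro t _
      have : 0 ≤ w / 2 * Real.exp t := by positivity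
      calc Real.exp (-(w / 2 * Real.exp t)) ≤ Real.exp 0 := Real.exp_le_exp.2 (by linarith)
      _ = 1 := Real.exp_zero
    rw [setIntegral_const, smul_eq_mul, mul_one, measureReal_def, Real.volume_Ioc,
      ENNReal.toReal_ofReal (by linarith)] at hb
    linarith
  have hkey : w / 2 = Real.exp (-t₀) := by
    rw [Real.exp_neg, ht₀def, Real.exp_log (by positivity)]
    field_simp
  have hpart2 : (∫ t in Set.Ioi t₀, Real.exp (-(w / 2 * Real.exp t))) ≤ Real.exp (-1) := by
    have hexpint : IntegrableOn (fun t => Real.exp (-t)) (Set.Ioi t₀) := by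
      simpa using exp_neg_integrableOn_Ioi t₀ one_pos
    have hb : (∫ t in Set.Ioi t₀, Real.exp (-(w / 2 * Real.exp t)))
        ≤ ∫ t in Set.Ioi t₀, Real.exp (t₀ - 1) * Real.exp (-t) := by
      apply setIntegral_mono_on (hint.mono_set (by rw [← hsplit]; exact Set.subset_union_right))
        (hexpint.const_mul _)
        measurableSet_Ioi
      intro t ht
      rw [← Real.exp_add]
      apply Real.exp_le_exp.2
      have h1 : w / 2 * Real.exp t = Real.exp (t - t₀) := by
        rw [hkey, ← Real.exp_add]; ring_nf
      have h2 : (t - t₀) + 1 ≤ Real.exp (t - t₀) := Real.add_one_le_exp _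
      rw [h1]
      linarith
    have : (∫ t in Set.Ioi t₀, Real.exp (t₀ - 1) * Real.exp (-t))
        = Real.exp (t₀ - 1) * Real.exp (-t₀) := by
      rw [MeasureTheory.integral_const_mul, integral_exp_neg_Ioi]
    rw [this, ← Real.exp_add] at hb
    calc (∫ t in Set.Ioi t₀, Real.exp (-(w / 2 * Real.exp t))) ≤ _ := hb
    _ = Real.exp (-1) := by ring_nf
  have hlog2 : Real.log 2 ≤ 1 := by
    have := Real.log_le_sub_one_of_pos (by norm_num : (0:ℝ) < 2)
    linarith
  have hexp : Real.exp (-1) ≤ 1 := (Real.exp_lt_one_iff.2 (by norm_num)).le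
  have ht₀eq : t₀ = Real.log 2 - Real.log w := by
    rw [ht₀def, Real.log_div (by norm_num) h0.ne']
  calc K0 w ≤ _ := step1
  _ = _ := hsum
  _ ≤ t₀ + Real.exp (-1) := add_le_add hpart1 hpart2
  _ ≤ -Real.log w + 2 := by rw [ht₀eq]; linarith

lemma K0_le_two {w : ℝ} (hw : 1 ≤ w) : K0 w ≤ 2 := by
  have h1 : K0 w ≤ K0 1 := by
    apply setIntegral_mono_on (K0_integrableOn (by linarith)) (K0_integrableOn one_pos)
      measurableSet_Ioi
    intro t _
    apply Real.exp_le_exp.2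
    have := Real.cosh_pos (x := t)
    nlinarith
  have h2 : K0 1 ≤ -Real.log 1 + 2 := K0_le one_pos (by norm_num)
  rw [Real.log_one] at h2
  linarith

lemma K0_ge {w : ℝ} (h0 : 0 < w) (h1 : w ≤ 1) : -Real.log w - 1 ≤ K0 w := by
  set t₁ := -Real.log w with ht₁def
  have ht₁ : 0 ≤ t₁ := by
    rw [ht₁def, neg_nonneg]
    exact Real.log_nonpos (le_of_lt h0) h1
  have hcomp : (∫ t in Set.Ioc (0:ℝ) t₁, (1 - w * Real.exp t)) ≤ K0 w := by
    have step1 : (∫ t in Set.Ioc (0:ℝ) t₁, (1 - w * Real.exp t))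
        ≤ ∫ t in Set.Ioc (0:ℝ) t₁, Real.exp (-w * Real.cosh t) := by
      apply setIntegral_mono_on
        ((continuous_const.sub (continuous_const.mul Real.continuous_exp)).integrableOn_Ioc)
        ((K0_integrableOn h0).mono_set Set.Ioc_subset_Ioi_self)
        measurableSet_Ioc
      intro t ht
      have h2 : (-w * Real.cosh t) + 1 ≤ Real.exp (-w * Real.cosh t) := Real.add_one_le_exp _
      have h3 : Real.cosh t ≤ Real.exp t := cosh_ub (le_of_lt ht.1)
      simp only [Pi.sub_apply, Pi.mul_apply]
      nlinarith
    have step2 : (∫ t in Set.Ioc (0:ℝ) t₁, Real.exp (-w * Real.cosh t)) ≤ K0 w := by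
      apply setIntegral_mono_set (K0_integrableOn h0)
        (Filter.Eventually.of_forall fun t => (Real.exp_pos _).le)
        (HasSubset.Subset.eventuallyLE Set.Ioc_subset_Ioi_self)
    linarith
  have hval : (∫ t in Set.Ioc (0:ℝ) t₁, (1 - w * Real.exp t)) = t₁ - 1 + w := by
    rw [← intervalIntegral.integral_of_le ht₁]
    rw [intervalIntegral.integral_sub intervalIntegrable_const
      (intervalIntegral.intervalIntegrable_exp.const_mul w)]
    rw [intervalIntegral.integral_const_mul, integral_exp, intervalIntegral.integral_const]
    have : Real.exp t₁ = 1 / w := by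
      rw [ht₁def, Real.exp_neg, Real.exp_log h0]
      exact (one_div w).symm
    rw [this, Real.exp_zero]
    field_simp
    ring
  rw [hval] at hcomp
  linarith

lemma abs_K0_add_log {w : ℝ} (h0 : 0 < w) (h1 : w ≤ 1) : |K0 w + Real.log w| ≤ 2 := by
  rw [abs_le]
  constructor
  · have := K0_ge h0 h1; linarith
  · have := K0_le h0 (by linarith); linarith

lemma measurable_K0 : Measurable K0 := by
  have : K0 = fun w => ∫ t, (fun q : ℝ × ℝ => Real.exp (-q.1 * Real.cosh q.2)) (w, t)
      ∂(volume.restrict (Set.Ioi 0)) := rfl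
  rw [this]
  exact (StronglyMeasurable.integral_prod_right'
    (((continuous_fst.neg.mul (Real.continuous_cosh.comp continuous_snd)).rexp).stronglyMeasurable)).measurable

/-- The Green's function of the free resolvent `(-Δ + α²)⁻¹` in two dimensions:
`G(x,y;α) = (1/(2π))·K₀(α‖x−y‖)`. -/
noncomputable def G (x y : EuclideanSpace ℝ (Fin 2)) (α : ℝ) : ℝ :=
  (1 / (2 * Real.pi)) * K0 (α * ‖x - y‖)

/-- The function `g(α) = −(ln α)/(2π)`. -/
noncomputable def g (α : ℝ) : ℝ := -(Real.log α) / (2 * Real.pi)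

abbrev E2 := EuclideanSpace ℝ (Fin 2)


lemma rpow_one_add_le {b s : ℝ} (hb : 0 ≤ b) (hs0 : 0 ≤ s) (hs1 : s ≤ 1) :
    (1 + b) ^ s ≤ 1 + b ^ s := by
  have h := NNReal.rpow_add_le_add_rpow (1 : NNReal) b.toNNReal hs0 hs1
  have h2 := NNReal.coe_le_coe.2 h
  rw [NNReal.coe_rpow, NNReal.coe_add, NNReal.coe_add, NNReal.coe_rpow, NNReal.coe_rpow,
    NNReal.coe_one, Real.coe_toNNReal b hb, Real.one_rpow] at h2
  exact h2

lemma diag_null : (volume : Measure (E2 × E2)) {p | p.1 = p.2} = 0 := by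
  have hmeas : MeasurableSet {p : E2 × E2 | p.1 = p.2} :=
    (isClosed_eq continuous_fst continuous_snd).measurableSet
  rw [MeasureTheory.Measure.volume_eq_prod, Measure.prod_apply hmeas]
  have h : ∀ x : E2, (Prod.mk x ⁻¹' {p : E2 × E2 | p.1 = p.2}) = {x} := by
    intro x; ext y; simp [eq_comm]
  simp [h]

/-- If `s ∈ [0,1)` and `V ∈ L¹(ℝ²)` is real-valued and satisfies (V_ln_s) and
(V_roll), then as `α → 0+`
`∫∫ |V(x)|·|G(x,y;α) − g(α)|·|V(y)| d(x,y) = o(|ln α|^{1−s})`. -/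
theorem M_pairing_littleO (s : ℝ) (hs : s ∈ Set.Ico (0 : ℝ) 1)
    (V : EuclideanSpace ℝ (Fin 2) → ℝ) (hV : Integrable V)
    (hlns : ∫⁻ x in {x : EuclideanSpace ℝ (Fin 2) | 1 < ‖x‖},
      ENNReal.ofReal (|Real.log ‖x‖| ^ s * |V x|) < ⊤)
    (hroll : ∫⁻ p in {p : EuclideanSpace ℝ (Fin 2) × EuclideanSpace ℝ (Fin 2) |
        ‖p.1 - p.2‖ < Real.exp 1},
      ENNReal.ofReal (|V p.1| * (Real.log ‖p.1 - p.2‖) ^ 2 * |V p.2|) < ⊤) :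
    (fun α : ℝ => ∫ p : EuclideanSpace ℝ (Fin 2) × EuclideanSpace ℝ (Fin 2),
        |V p.1| * |G p.1 p.2 α - g α| * |V p.2|)
      =o[nhdsWithin 0 (Set.Ioi (0 : ℝ))] (fun α : ℝ => |Real.log α| ^ (1 - s)) := by
  obtain ⟨hs0, hs1⟩ := hs
  have h1s : 0 < 1 - s := by linarith
  -- basic measurability
  have hVabs : AEStronglyMeasurable (fun x : E2 => |V x|) volume := by
    simpa [Real.norm_eq_abs] using hV.1.norm
  have hfst : AEStronglyMeasurable (fun p : E2 × E2 => |V p.1|) volume := by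
    rw [MeasureTheory.Measure.volume_eq_prod]; exact hVabs.comp_fst
  have hsnd : AEStronglyMeasurable (fun p : E2 × E2 => |V p.2|) volume := by
    rw [MeasureTheory.Measure.volume_eq_prod]; exact hVabs.comp_snd
  have hVofR : AEMeasurable (fun x : E2 => ENNReal.ofReal |V x|) volume :=
    hVabs.aemeasurable.ennreal_ofReal
  -- N
  set N : ℝ≥0∞ := ∫⁻ x : E2, ENNReal.ofReal |V x| with hNdef
  have hN : N ≠ ⊤ := by
    have h2 : ∫⁻ x : E2, (‖V x‖₊ : ℝ≥0∞) < ⊤ := hV.2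
    have : N = ∫⁻ x : E2, (‖V x‖₊ : ℝ≥0∞) := by
      apply lintegral_congr; intro x
      rw [← enorm_eq_nnnorm, ← ofReal_norm, Real.norm_eq_abs]
    rw [this]
    exact h2.ne
  -- w
  set w : E2 → ℝ := fun x => if 1 < ‖x‖ then |Real.log ‖x‖| ^ s else 0 with hwdef
  have hwmeas : Measurable w := by
    apply Measurable.ite (measurableSet_lt measurable_const measurable_norm) _ measurable_const
    exact (Real.continuous_rpow_const hs0).measurable.comp
      ((Real.measurable_log.comp measurable_norm).abs)
  have hwnn : ∀ x, 0 ≤ w x := by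
    intro x
    rw [hwdef]
    dsimp only
    split
    · positivity
    · exact le_refl 0
  -- W
  set W : ℝ≥0∞ := ∫⁻ x : E2, ENNReal.ofReal (w x * |V x|) with hWdef
  have hWmeas : AEMeasurable (fun x : E2 => ENNReal.ofReal (w x * |V x|)) volume :=
    ((hwmeas.aemeasurable.mul hVabs.aemeasurable)).ennreal_ofReal
  have hW : W ≠ ⊤ := by
    have hWeq : W = ∫⁻ x in {x : E2 | 1 < ‖x‖},
        ENNReal.ofReal (|Real.log ‖x‖| ^ s * |V x|) := by
      rw [hWdef, ← lintegral_indicator (measurableSet_lt measurable_const measurable_norm)]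
      apply lintegral_congr; intro x
      by_cases hx : 1 < ‖x‖
      · rw [Set.indicator_of_mem (show x ∈ {x : E2 | 1 < ‖x‖} from hx), hwdef]
        simp [hx]
      · rw [Set.indicator_of_notMem (show x ∉ {x : E2 | 1 < ‖x‖} from hx), hwdef]
        simp [hx]
    rw [hWeq]
    exact hlns.ne
  -- D and μ'
  set D : E2 × E2 → ℝ≥0∞ :=
    fun p => ENNReal.ofReal (|V p.1| * ((1 + w p.1) + w p.2) * |V p.2|) with hDdef
  set μ' : Measure (E2 × E2) := volume.withDensity D with hmu'def
  have hofR1 : AEMeasurable (fun p : E2 × E2 => ENNReal.ofReal |V p.1|) volume :=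
    hfst.aemeasurable.ennreal_ofReal
  have hofR2 : AEMeasurable (fun p : E2 × E2 => ENNReal.ofReal |V p.2|) volume :=
    hsnd.aemeasurable.ennreal_ofReal
  have hw1m : AEStronglyMeasurable (fun p : E2 × E2 => w p.1 * |V p.1|) volume := by
    rw [MeasureTheory.Measure.volume_eq_prod]
    exact (hwmeas.aestronglyMeasurable.mul hVabs).comp_fst
  have hw2m : AEStronglyMeasurable (fun p : E2 × E2 => w p.2 * |V p.2|) volume := by
    rw [MeasureTheory.Measure.volume_eq_prod]
    exact (hwmeas.aestronglyMeasurable.mul hVabs).comp_snd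
  have hf1 : (∫⁻ p : E2 × E2, ENNReal.ofReal |V p.1| * ENNReal.ofReal |V p.2|) = N * N := by
    rw [MeasureTheory.Measure.volume_eq_prod]
    exact lintegral_prod_mul hVabs.aemeasurable.ennreal_ofReal hVabs.aemeasurable.ennreal_ofReal
  have hf2 : (∫⁻ p : E2 × E2,
      ENNReal.ofReal (w p.1 * |V p.1|) * ENNReal.ofReal |V p.2|) = W * N := by
    rw [MeasureTheory.Measure.volume_eq_prod]
    exact lintegral_prod_mul hWmeas hVabs.aemeasurable.ennreal_ofReal
  have hf3 : (∫⁻ p : E2 × E2,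
      ENNReal.ofReal |V p.1| * ENNReal.ofReal (w p.2 * |V p.2|)) = N * W := by
    rw [MeasureTheory.Measure.volume_eq_prod]
    exact lintegral_prod_mul hVabs.aemeasurable.ennreal_ofReal hWmeas
  have hDpt : ∀ p : E2 × E2, D p = ENNReal.ofReal |V p.1| * ENNReal.ofReal |V p.2|
      + (ENNReal.ofReal (w p.1 * |V p.1|) * ENNReal.ofReal |V p.2|
        + ENNReal.ofReal |V p.1| * ENNReal.ofReal (w p.2 * |V p.2|)) := by
    intro p
    rw [hDdef]
    dsimp only
    have e1 : |V p.1| * ((1 + w p.1) + w p.2) * |V p.2|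
        = |V p.1| * |V p.2| + ((w p.1 * |V p.1|) * |V p.2| + |V p.1| * (w p.2 * |V p.2|)) := by
      ring
    rw [e1, ENNReal.ofReal_add (by positivity) (by positivity),
      ENNReal.ofReal_add (by positivity) (by positivity),
      ENNReal.ofReal_mul (abs_nonneg _), ENNReal.ofReal_mul (mul_nonneg (hwnn _) (abs_nonneg _)),
      ENNReal.ofReal_mul (abs_nonneg _)]
  have hDlint : (∫⁻ p : E2 × E2, D p) = N * N + (W * N + N * W) := by
    calc (∫⁻ p : E2 × E2, D p)
        = ∫⁻ p : E2 × E2, (ENNReal.ofReal |V p.1| * ENNReal.ofReal |V p.2|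
          + (ENNReal.ofReal (w p.1 * |V p.1|) * ENNReal.ofReal |V p.2|
            + ENNReal.ofReal |V p.1| * ENNReal.ofReal (w p.2 * |V p.2|))) :=
          lintegral_congr hDpt
      _ = (∫⁻ p : E2 × E2, ENNReal.ofReal |V p.1| * ENNReal.ofReal |V p.2|)
          + ∫⁻ p : E2 × E2, (ENNReal.ofReal (w p.1 * |V p.1|) * ENNReal.ofReal |V p.2|
            + ENNReal.ofReal |V p.1| * ENNReal.ofReal (w p.2 * |V p.2|)) :=
          lintegral_add_left' (hofR1.mul hofR2) _
      _ = N * N + (W * N + N * W) := by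
          rw [hf1, lintegral_add_left' (f := fun p : E2 × E2 => ENNReal.ofReal (w p.1 * |V p.1|) * ENNReal.ofReal |V p.2|) (hw1m.aemeasurable.ennreal_ofReal.mul hofR2) _, hf2, hf3]
  have hmu'fin : μ' Set.univ ≠ ⊤ := by
    rw [hmu'def, withDensity_apply _ MeasurableSet.univ, Measure.restrict_univ, hDlint]
    exact (ENNReal.add_ne_top.2 ⟨ENNReal.mul_ne_top hN hN,
      ENNReal.add_ne_top.2 ⟨ENNReal.mul_ne_top hW hN, ENNReal.mul_ne_top hN hW⟩⟩)
  -- the sets S n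
  set S : ℕ → Set (E2 × E2) := fun n => {p | (n : ℝ) ≤ ‖p.1 - p.2‖} with hSdef
  have hSmeas : ∀ n, MeasurableSet (S n) := fun n =>
    measurableSet_le measurable_const (continuous_fst.sub continuous_snd).norm.measurable
  have hSanti : Antitone S := by
    intro m n hmn p hp
    simp only [hSdef, Set.mem_setOf_eq] at hp ⊢
    exact le_trans (by exact_mod_cast hmn) hp
  have hSempty : (⋂ n, S n) = ∅ := by
    ext p
    simp only [Set.mem_iInter, Set.mem_empty_iff_false, iff_false, not_forall]
    obtain ⟨n, hn⟩ := exists_nat_gt ‖p.1 - p.2‖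
    exact ⟨n, by simp only [hSdef, Set.mem_setOf_eq]; exact not_le.2 hn⟩
  have htend : Tendsto (fun n => μ' (S n)) atTop (nhds 0) := by
    have h := MeasureTheory.tendsto_measure_iInter_atTop (μ := μ')
      (fun n => (hSmeas n).nullMeasurableSet) hSanti
      ⟨0, (lt_of_le_of_lt (measure_mono (Set.subset_univ _))
        (lt_top_iff_ne_top.2 hmu'fin)).ne⟩
    rw [hSempty, measure_empty] at h
    exact h
  -- C1
  set C1 : ℝ≥0∞ := ∫⁻ p : E2 × E2 in {p : E2 × E2 | ‖p.1 - p.2‖ < Real.exp 1},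
    ENNReal.ofReal (|V p.1| * (2 + |Real.log ‖p.1 - p.2‖|) * |V p.2|) with hC1def
  have hA : (∫⁻ p : E2 × E2, ENNReal.ofReal (3 * (|V p.1| * |V p.2|)))
      = ENNReal.ofReal 3 * (N * N) := by
    rw [← hf1, ← lintegral_const_mul' _ _ ENNReal.ofReal_ne_top]
    apply lintegral_congr; intro p
    rw [ENNReal.ofReal_mul (by norm_num : (0:ℝ) ≤ 3), ENNReal.ofReal_mul (abs_nonneg _)]
  have hC1fin : C1 ≠ ⊤ := by
    have hb : ∀ p : E2 × E2,
        ENNReal.ofReal (|V p.1| * (2 + |Real.log ‖p.1 - p.2‖|) * |V p.2|)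
        ≤ ENNReal.ofReal (3 * (|V p.1| * |V p.2|))
          + ENNReal.ofReal (|V p.1| * (Real.log ‖p.1 - p.2‖) ^ 2 * |V p.2|) := by
      intro p
      rw [← ENNReal.ofReal_add (by positivity) (by positivity)]
      apply ENNReal.ofReal_le_ofReal
      have habs : |Real.log ‖p.1 - p.2‖| ≤ 1 + (Real.log ‖p.1 - p.2‖) ^ 2 := by
        nlinarith [sq_abs (Real.log ‖p.1 - p.2‖), sq_nonneg (|Real.log ‖p.1 - p.2‖| - 1),
          abs_nonneg (Real.log ‖p.1 - p.2‖)]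
      have hvv : 0 ≤ |V p.1| * |V p.2| := mul_nonneg (abs_nonneg _) (abs_nonneg _)
      nlinarith [sq_nonneg (Real.log ‖p.1 - p.2‖)]
    have haux3 : AEMeasurable (fun p : E2 × E2 => ENNReal.ofReal (3 * (|V p.1| * |V p.2|)))
        (volume.restrict {p : E2 × E2 | ‖p.1 - p.2‖ < Real.exp 1}) :=
      (((hfst.mul hsnd).const_mul (3:ℝ)).aemeasurable.ennreal_ofReal).restrict
    have hle : C1 ≤ (∫⁻ p : E2 × E2 in {p : E2 × E2 | ‖p.1 - p.2‖ < Real.exp 1},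
          ENNReal.ofReal (3 * (|V p.1| * |V p.2|)))
        + ∫⁻ p : E2 × E2 in {p : E2 × E2 | ‖p.1 - p.2‖ < Real.exp 1},
          ENNReal.ofReal (|V p.1| * (Real.log ‖p.1 - p.2‖) ^ 2 * |V p.2|) := by
      rw [hC1def, ← lintegral_add_left' haux3]
      exact lintegral_mono fun p => hb p
    apply ne_top_of_le_ne_top _ hle
    apply ENNReal.add_ne_top.2
    constructor
    · apply ne_top_of_le_ne_top _ (setLIntegral_le_lintegral _ _)
      rw [hA]
      exact ENNReal.mul_ne_top ENNReal.ofReal_ne_top (ENNReal.mul_ne_top hN hN)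
    · exact hroll.ne
  -- key estimate
  have key : ∀ n : ℕ, 3 ≤ n → ∀ α : ℝ, 0 < α → α < Real.exp (-1) → α < 1 / n →
      (∫⁻ p : E2 × E2, ENNReal.ofReal (|V p.1| * |G p.1 p.2 α - g α| * |V p.2|))
        ≤ C1 + ENNReal.ofReal (3 * Real.log n) * (N * N)
          + ENNReal.ofReal (3 * (-Real.log α) ^ (1 - s)) * μ' (S n) := by
    intro n hn3 α hα hαe hαn
    have hnR : (3:ℝ) ≤ (n:ℝ) := by exact_mod_cast hn3
    have hexplt3 : Real.exp 1 < 3 := by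
      have := Real.exp_one_lt_d9
      linarith
    have hexp1n : Real.exp 1 ≤ (n:ℝ) := by linarith
    have hlogn1 : 1 ≤ Real.log n := by
      rw [Real.le_log_iff_exp_le (by linarith : (0:ℝ) < n)]
      exact hexp1n
    set L : ℝ := -Real.log α with hLdef
    have hL1 : 1 < L := by
      have hlt : Real.log α < -1 := (Real.log_lt_iff_lt_exp hα).2 (by simpa using hαe)
      rw [hLdef]; linarith
    have hL0 : (0:ℝ) ≤ L := by linarith
    set bnd : E2 × E2 → ℝ := fun p =>
      if ‖p.1 - p.2‖ < Real.exp 1 then 2 + |Real.log ‖p.1 - p.2‖|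
      else if ‖p.1 - p.2‖ < (n:ℝ) then 3 * Real.log n
      else 3 * (L ^ (1 - s) * Real.log ‖p.1 - p.2‖ ^ s) with hbnddef
    -- pointwise a.e. bound
    have hae : ∀ᵐ p : E2 × E2, ENNReal.ofReal (|V p.1| * |G p.1 p.2 α - g α| * |V p.2|)
        ≤ ENNReal.ofReal (|V p.1| * bnd p * |V p.2|) := by
      have hdiagae : ∀ᵐ p : E2 × E2, p.1 ≠ p.2 := by
        rw [ae_iff]
        have : {p : E2 × E2 | ¬p.1 ≠ p.2} = {p : E2 × E2 | p.1 = p.2} := by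
          ext p; simp
        rw [this]
        exact diag_null
      filter_upwards [hdiagae] with p hp
      apply ENNReal.ofReal_le_ofReal
      have hr : 0 < ‖p.1 - p.2‖ := by
        rw [norm_pos_iff, sub_ne_zero]; exact hp
      have hGg : |G p.1 p.2 α - g α| ≤ |K0 (α * ‖p.1 - p.2‖) + Real.log α| := by
        have heq : G p.1 p.2 α - g α
            = (K0 (α * ‖p.1 - p.2‖) + Real.log α) * (1 / (2 * Real.pi)) := by
          simp only [G, g]; ring
        rw [heq, abs_mul]
        have hpi : |1 / (2 * Real.pi)| ≤ 1 := by
          rw [abs_of_pos (by positivity), div_le_one (by positivity)]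
          nlinarith [Real.pi_gt_three]
        calc |K0 (α * ‖p.1 - p.2‖) + Real.log α| * |1 / (2 * Real.pi)|
            ≤ |K0 (α * ‖p.1 - p.2‖) + Real.log α| * 1 :=
              mul_le_mul_of_nonneg_left hpi (abs_nonneg _)
          _ = _ := mul_one _
      have hsmallcase : ∀ u : ℝ, 0 < u → α * u ≤ 1 →
          |K0 (α * u) + Real.log α| ≤ 2 + |Real.log u| := by
        intro u hu hau
        have hlogmul : Real.log (α * u) = Real.log α + Real.log u :=
          Real.log_mul hα.ne' hu.ne'
        have h2 : |K0 (α * u) + Real.log (α * u)| ≤ 2 := abs_K0_add_log (mul_pos hα hu) hau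
        have heq2 : K0 (α * u) + Real.log α
            = (K0 (α * u) + Real.log (α * u)) + (- Real.log u) := by
          rw [hlogmul]; ring
        calc |K0 (α * u) + Real.log α|
            = |(K0 (α * u) + Real.log (α * u)) + (- Real.log u)| := by rw [heq2]
          _ ≤ |K0 (α * u) + Real.log (α * u)| + |(- Real.log u)| := abs_add_le _ _
          _ = |K0 (α * u) + Real.log (α * u)| + |Real.log u| := by rw [abs_neg]
          _ ≤ 2 + |Real.log u| := by linarith
      have hmain : |K0 (α * ‖p.1 - p.2‖) + Real.log α| ≤ bnd p := by
        set r := ‖p.1 - p.2‖ with hrdef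
        rw [hbnddef]
        dsimp only
        by_cases h1 : r < Real.exp 1
        · rw [if_pos h1]
          apply hsmallcase r hr
          have hlt : α * r < Real.exp (-1) * Real.exp 1 :=
            mul_lt_mul'' hαe h1 hα.le hr.le
          rw [← Real.exp_add] at hlt
          simpa using hlt.le
        · rw [if_neg h1]
          push_neg at h1
          have hr1 : (1:ℝ) < r := by nlinarith [Real.exp_one_gt_d9]
          have hlogr0 : 0 ≤ Real.log r := Real.log_nonneg hr1.le
          by_cases h2 : r < (n:ℝ)
          · rw [if_pos h2]
            have hau : α * r ≤ 1 := by
              have hn0 : (0:ℝ) < n := by linarith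
              have hlt := mul_lt_mul'' hαn h2 hα.le hr.le
              rw [one_div, inv_mul_cancel₀ hn0.ne'] at hlt
              exact hlt.le
            have hsc := hsmallcase r hr hau
            rw [abs_of_nonneg hlogr0] at hsc
            have hlogrn : Real.log r ≤ Real.log n := Real.log_le_log hr h2.le
            linarith
          · rw [if_neg h2]
            push_neg at h2
            have h1logr : 1 ≤ Real.log r := by
              rw [Real.le_log_iff_exp_le hr]
              linarith
            have hsplitr : Real.log r ^ s * Real.log r ^ (1 - s) = Real.log r := by
              rw [← Real.rpow_add (by linarith : (0:ℝ) < Real.log r)]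
              norm_num
            have hsplitL : L ^ s * L ^ (1 - s) = L := by
              rw [← Real.rpow_add (by linarith : (0:ℝ) < L)]
              norm_num
            by_cases h3 : α * r ≤ 1
            · have hsc := hsmallcase r hr h3
              rw [abs_of_nonneg hlogr0] at hsc
              have hrL : Real.log r ≤ L := by
                have hlogmul : Real.log (α * r) = Real.log α + Real.log r :=
                  Real.log_mul hα.ne' hr.ne'
                have hnp := Real.log_nonpos (le_of_lt (mul_pos hα hr)) h3
                rw [hlogmul] at hnp
                rw [hLdef]; linarith
              have hpow : Real.log r ^ (1 - s) ≤ L ^ (1 - s) :=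
                Real.rpow_le_rpow hlogr0 hrL (by linarith)
              have hrs0 : 0 ≤ Real.log r ^ s := Real.rpow_nonneg hlogr0 s
              calc |K0 (α * r) + Real.log α| ≤ 2 + Real.log r := hsc
                _ ≤ 3 * Real.log r := by linarith
                _ = 3 * (Real.log r ^ s * Real.log r ^ (1 - s)) := by rw [hsplitr]
                _ ≤ 3 * (Real.log r ^ s * L ^ (1 - s)) := by
                    have := mul_le_mul_of_nonneg_left hpow hrs0
                    linarith
                _ = 3 * (L ^ (1 - s) * Real.log r ^ s) := by ring
            · push_neg at h3
              have hαr1 : (1:ℝ) ≤ α * r := h3.le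
              have hla : Real.log α < 0 := Real.log_neg hα (by
                have : Real.exp (-1) < 1 := Real.exp_lt_one_iff.2 (by norm_num)
                linarith)
              have habs : |K0 (α * r) + Real.log α| ≤ K0 (α * r) + L := by
                calc |K0 (α * r) + Real.log α| ≤ |K0 (α * r)| + |Real.log α| := abs_add_le _ _
                  _ = K0 (α * r) + L := by
                      rw [abs_of_nonneg (K0_nonneg _), abs_of_neg hla]
              have hK2 : K0 (α * r) ≤ 2 := K0_le_two hαr1
              have hLr : L ≤ Real.log r := by
                have hpos := Real.log_pos h3
                have hlogmul : Real.log (α * r) = Real.log α + Real.log r :=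
                  Real.log_mul hα.ne' hr.ne'
                rw [hlogmul] at hpos
                rw [hLdef]; linarith
              have hpow : L ^ s ≤ Real.log r ^ s := Real.rpow_le_rpow hL0 hLr hs0
              have hL1s0 : 0 ≤ L ^ (1 - s) := Real.rpow_nonneg hL0 _
              calc |K0 (α * r) + Real.log α| ≤ K0 (α * r) + L := habs
                _ ≤ 2 + L := by linarith
                _ ≤ 3 * L := by linarith
                _ = 3 * (L ^ s * L ^ (1 - s)) := by rw [hsplitL]
                _ ≤ 3 * (Real.log r ^ s * L ^ (1 - s)) := by
                    have := mul_le_mul_of_nonneg_right hpow hL1s0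
                    linarith
                _ = 3 * (L ^ (1 - s) * Real.log r ^ s) := by ring
      have h := hGg.trans hmain
      have h' := mul_le_mul_of_nonneg_left h (abs_nonneg (V p.1))
      exact mul_le_mul_of_nonneg_right h' (abs_nonneg (V p.2))
    -- split the integral
    set s2 : Set (E2 × E2) :=
      {p : E2 × E2 | Real.exp 1 ≤ ‖p.1 - p.2‖ ∧ ‖p.1 - p.2‖ < (n:ℝ)} with hs2def
    have hrcont : Continuous (fun p : E2 × E2 => ‖p.1 - p.2‖) :=
      (continuous_fst.sub continuous_snd).norm
    have hm1 : MeasurableSet {p : E2 × E2 | ‖p.1 - p.2‖ < Real.exp 1} :=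
      measurableSet_lt hrcont.measurable measurable_const
    have hm2 : MeasurableSet s2 := by
      rw [hs2def, Set.setOf_and]
      exact (measurableSet_le measurable_const hrcont.measurable).inter
        (measurableSet_lt hrcont.measurable measurable_const)
    have hunion : {p : E2 × E2 | ‖p.1 - p.2‖ < Real.exp 1} ∪ (s2 ∪ S n) = Set.univ := by
      ext p
      simp only [hs2def, hSdef, Set.mem_union, Set.mem_setOf_eq, Set.mem_univ, iff_true]
      by_cases h1 : ‖p.1 - p.2‖ < Real.exp 1
      · exact Or.inl h1
      · push_neg at h1
        by_cases h2 : ‖p.1 - p.2‖ < (n:ℝ)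
        · exact Or.inr (Or.inl ⟨h1, h2⟩)
        · push_neg at h2
          exact Or.inr (Or.inr h2)
    have hd1 : Disjoint {p : E2 × E2 | ‖p.1 - p.2‖ < Real.exp 1} (s2 ∪ S n) := by
      rw [Set.disjoint_left]
      intro p hp1 hp2
      simp only [Set.mem_setOf_eq] at hp1
      rcases hp2 with h | h
      · simp only [hs2def, Set.mem_setOf_eq] at h
        exact absurd hp1 (not_lt.2 h.1)
      · simp only [hSdef, Set.mem_setOf_eq] at h
        have hnR : (3:ℝ) ≤ (n:ℝ) := by exact_mod_cast hn3
        linarith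
    have hd2 : Disjoint s2 (S n) := by
      rw [Set.disjoint_left]
      intro p hp1 hp2
      simp only [hs2def, Set.mem_setOf_eq] at hp1
      simp only [hSdef, Set.mem_setOf_eq] at hp2
      linarith [hp1.2]
    have hnR : (3:ℝ) ≤ (n:ℝ) := by exact_mod_cast hn3
    have hlogn0 : (0:ℝ) ≤ 3 * Real.log n := by linarith
    have h3L0 : (0:ℝ) ≤ 3 * (L ^ (1 - s)) := by positivity
    -- term 1
    have hT1 : (∫⁻ p in {p : E2 × E2 | ‖p.1 - p.2‖ < Real.exp 1},
        ENNReal.ofReal (|V p.1| * bnd p * |V p.2|)) = C1 := by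
      rw [hC1def]
      apply setLIntegral_congr_fun hm1
      intro p hp
      simp only [Set.mem_setOf_eq] at hp
      rw [hbnddef]
      dsimp only
      rw [if_pos hp]
    -- term 2
    have hT2 : (∫⁻ p in s2, ENNReal.ofReal (|V p.1| * bnd p * |V p.2|))
        ≤ ENNReal.ofReal (3 * Real.log n) * (N * N) := by
      have he : ∀ p ∈ s2, ENNReal.ofReal (|V p.1| * bnd p * |V p.2|)
          = ENNReal.ofReal (3 * Real.log n)
            * (ENNReal.ofReal |V p.1| * ENNReal.ofReal |V p.2|) := by
        intro p hp
        simp only [hs2def, Set.mem_setOf_eq] at hp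
        rw [hbnddef]
        dsimp only
        rw [if_neg (not_lt.2 hp.1), if_pos hp.2]
        rw [show |V p.1| * (3 * Real.log n) * |V p.2|
            = (3 * Real.log n) * (|V p.1| * |V p.2|) by ring,
          ENNReal.ofReal_mul hlogn0, ENNReal.ofReal_mul (abs_nonneg _)]
      calc (∫⁻ p in s2, ENNReal.ofReal (|V p.1| * bnd p * |V p.2|))
          = ∫⁻ p in s2, ENNReal.ofReal (3 * Real.log n)
            * (ENNReal.ofReal |V p.1| * ENNReal.ofReal |V p.2|) :=
            setLIntegral_congr_fun hm2 he
        _ = ENNReal.ofReal (3 * Real.log n)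
            * ∫⁻ p in s2, (ENNReal.ofReal |V p.1| * ENNReal.ofReal |V p.2|) :=
            lintegral_const_mul' _ _ ENNReal.ofReal_ne_top
        _ ≤ ENNReal.ofReal (3 * Real.log n) * (N * N) :=
            mul_le_mul_right ((setLIntegral_le_lintegral _ _).trans hf1.le) _
    -- term 3
    have hT3 : (∫⁻ p in S n, ENNReal.ofReal (|V p.1| * bnd p * |V p.2|))
        ≤ ENNReal.ofReal (3 * L ^ (1 - s)) * μ' (S n) := by
      have he : ∀ p ∈ S n, ENNReal.ofReal (|V p.1| * bnd p * |V p.2|)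
          = ENNReal.ofReal (3 * L ^ (1 - s))
            * ENNReal.ofReal (|V p.1| * Real.log ‖p.1 - p.2‖ ^ s * |V p.2|) := by
        intro p hp
        simp only [hSdef, Set.mem_setOf_eq] at hp
        rw [hbnddef]
        dsimp only
        rw [if_neg (by push_neg; nlinarith [Real.exp_one_lt_d9]), if_neg (not_lt.2 hp)]
        rw [show |V p.1| * (3 * (L ^ (1 - s) * Real.log ‖p.1 - p.2‖ ^ s)) * |V p.2|
            = (3 * L ^ (1 - s)) * (|V p.1| * Real.log ‖p.1 - p.2‖ ^ s * |V p.2|) by ring,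
          ENNReal.ofReal_mul h3L0]
      have hinner : (∫⁻ p in S n,
          ENNReal.ofReal (|V p.1| * Real.log ‖p.1 - p.2‖ ^ s * |V p.2|)) ≤ μ' (S n) := by
        rw [hmu'def, withDensity_apply _ (hSmeas n)]
        apply lintegral_mono_ae
        rw [ae_restrict_iff' (hSmeas n)]
        apply ae_of_all
        intro p hp
        simp only [hSdef, Set.mem_setOf_eq] at hp
        rw [hDdef]
        apply ENNReal.ofReal_le_ofReal
        have hr3 : (3:ℝ) ≤ ‖p.1 - p.2‖ := le_trans hnR hp
        have hMle : ‖p.1 - p.2‖ ≤ 2 * max ‖p.1‖ ‖p.2‖ := by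
          have h1 := norm_sub_le p.1 p.2
          have h2 := le_max_left ‖p.1‖ ‖p.2‖
          have h3 := le_max_right ‖p.1‖ ‖p.2‖
          linarith
        have hM1 : 1 < max ‖p.1‖ ‖p.2‖ := by linarith
        have hlogr0 : 0 ≤ Real.log ‖p.1 - p.2‖ := Real.log_nonneg (by linarith)
        have h2M : Real.log ‖p.1 - p.2‖ ≤ 1 + Real.log (max ‖p.1‖ ‖p.2‖) := by
          have hle : Real.log ‖p.1 - p.2‖ ≤ Real.log (2 * max ‖p.1‖ ‖p.2‖) :=
            Real.log_le_log (by linarith) hMle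
          have hmul : Real.log (2 * max ‖p.1‖ ‖p.2‖)
              = Real.log 2 + Real.log (max ‖p.1‖ ‖p.2‖) :=
            Real.log_mul two_ne_zero (by linarith)
          have hlog2 : Real.log 2 ≤ 1 := by
            have := Real.log_le_sub_one_of_pos (by norm_num : (0:ℝ) < 2)
            linarith
          linarith [hle, hmul.le, hmul.ge]
        have hstep : Real.log ‖p.1 - p.2‖ ^ s ≤ 1 + Real.log (max ‖p.1‖ ‖p.2‖) ^ s :=
          (Real.rpow_le_rpow hlogr0 h2M hs0).trans
            (rpow_one_add_le (Real.log_nonneg hM1.le) hs0 hs1.le)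
        have hwM : Real.log (max ‖p.1‖ ‖p.2‖) ^ s ≤ w p.1 + w p.2 := by
          rcases max_cases ‖p.1‖ ‖p.2‖ with ⟨hMe, _⟩ | ⟨hMe, _⟩ <;> rw [hMe]
          · have h1 : 1 < ‖p.1‖ := by rw [← hMe]; exact hM1
            have hw1 : w p.1 = |Real.log ‖p.1‖| ^ s := by rw [hwdef]; simp [h1]
            rw [hw1, abs_of_nonneg (Real.log_nonneg h1.le)]
            linarith [hwnn p.2]
          · have h1 : 1 < ‖p.2‖ := by rw [← hMe]; exact hM1
            have hw1 : w p.2 = |Real.log ‖p.2‖| ^ s := by rw [hwdef]; simp [h1]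
            rw [hw1, abs_of_nonneg (Real.log_nonneg h1.le)]
            linarith [hwnn p.1]
        have hfinal : Real.log ‖p.1 - p.2‖ ^ s ≤ (1 + w p.1) + w p.2 := by linarith
        have h' := mul_le_mul_of_nonneg_left hfinal (abs_nonneg (V p.1))
        exact mul_le_mul_of_nonneg_right h' (abs_nonneg (V p.2))
      calc (∫⁻ p in S n, ENNReal.ofReal (|V p.1| * bnd p * |V p.2|))
          = ∫⁻ p in S n, ENNReal.ofReal (3 * L ^ (1 - s))
            * ENNReal.ofReal (|V p.1| * Real.log ‖p.1 - p.2‖ ^ s * |V p.2|) :=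
            setLIntegral_congr_fun (hSmeas n) he
        _ = ENNReal.ofReal (3 * L ^ (1 - s))
            * ∫⁻ p in S n, ENNReal.ofReal (|V p.1| * Real.log ‖p.1 - p.2‖ ^ s * |V p.2|) :=
            lintegral_const_mul' _ _ ENNReal.ofReal_ne_top
        _ ≤ ENNReal.ofReal (3 * L ^ (1 - s)) * μ' (S n) := mul_le_mul_right hinner _
    calc (∫⁻ p : E2 × E2, ENNReal.ofReal (|V p.1| * |G p.1 p.2 α - g α| * |V p.2|))
        ≤ ∫⁻ p : E2 × E2, ENNReal.ofReal (|V p.1| * bnd p * |V p.2|) := lintegral_mono_ae hae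
      _ = ∫⁻ p in {p : E2 × E2 | ‖p.1 - p.2‖ < Real.exp 1} ∪ (s2 ∪ S n),
          ENNReal.ofReal (|V p.1| * bnd p * |V p.2|) := by
          rw [hunion, Measure.restrict_univ]
      _ = (∫⁻ p in {p : E2 × E2 | ‖p.1 - p.2‖ < Real.exp 1},
            ENNReal.ofReal (|V p.1| * bnd p * |V p.2|))
          + ((∫⁻ p in s2, ENNReal.ofReal (|V p.1| * bnd p * |V p.2|))
            + (∫⁻ p in S n, ENNReal.ofReal (|V p.1| * bnd p * |V p.2|))) := by
          rw [lintegral_union (hm2.union (hSmeas n)) hd1, lintegral_union (hSmeas n) hd2]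
      _ ≤ C1 + (ENNReal.ofReal (3 * Real.log n) * (N * N)
            + ENNReal.ofReal (3 * L ^ (1 - s)) * μ' (S n)) :=
          add_le_add hT1.le (add_le_add hT2 hT3)
      _ = C1 + ENNReal.ofReal (3 * Real.log n) * (N * N)
            + ENNReal.ofReal (3 * (-Real.log α) ^ (1 - s)) * μ' (S n) := by
          rw [← add_assoc, hLdef]
  -- conclusion
  rw [isLittleO_iff]
  intro c hc
  obtain ⟨n, hn3, hμn⟩ : ∃ n : ℕ, 3 ≤ n ∧ μ' (S n) < ENNReal.ofReal (c / 6) := by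
    have hpos : (0:ℝ≥0∞) < ENNReal.ofReal (c / 6) := ENNReal.ofReal_pos.2 (by linarith)
    exact ((eventually_ge_atTop 3).and (htend.eventually_lt_const hpos)).exists
  set Kc : ℝ≥0∞ := C1 + ENNReal.ofReal (3 * Real.log n) * (N * N) with hKcdef
  have hKfin : Kc ≠ ⊤ := ENNReal.add_ne_top.2
    ⟨hC1fin, ENNReal.mul_ne_top ENNReal.ofReal_ne_top (ENNReal.mul_ne_top hN hN)⟩
  have hβ : (0:ℝ) < min (Real.exp (-1)) (1 / n) := lt_min (Real.exp_pos _) (by positivity)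
  have hev1 : ∀ᶠ α : ℝ in nhdsWithin 0 (Set.Ioi 0), α < min (Real.exp (-1)) (1 / n) := by
    have hIoo : Set.Ioo (0:ℝ) (min (Real.exp (-1)) (1 / n)) ∈ nhdsWithin (0:ℝ) (Set.Ioi 0) :=
      Ioo_mem_nhdsGT_of_mem ⟨le_refl 0, hβ⟩
    filter_upwards [hIoo] with α hα using hα.2
  have htendL : Tendsto (fun α : ℝ => (-Real.log α) ^ (1 - s))
      (nhdsWithin 0 (Set.Ioi 0)) atTop :=
    (tendsto_rpow_atTop h1s).comp
      (tendsto_neg_atBot_atTop.comp Real.tendsto_log_nhdsGT_zero)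
  have hev2 : ∀ᶠ α : ℝ in nhdsWithin 0 (Set.Ioi 0),
      Kc.toReal ≤ c / 2 * (-Real.log α) ^ (1 - s) := by
    filter_upwards [htendL.eventually_ge_atTop (2 / c * Kc.toReal)] with α hα
    calc Kc.toReal = c / 2 * (2 / c * Kc.toReal) := by field_simp
    _ ≤ c / 2 * (-Real.log α) ^ (1 - s) :=
        mul_le_mul_of_nonneg_left hα (by positivity)
  filter_upwards [hev1, hev2, self_mem_nhdsWithin] with α hα1 hα2 hα0
  simp only [Set.mem_Ioi] at hα0
  have hαe : α < Real.exp (-1) := lt_of_lt_of_le hα1 (min_le_left _ _)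
  have hαn : α < 1 / n := lt_of_lt_of_le hα1 (min_le_right _ _)
  have hα1' : α < 1 := lt_trans hαe (Real.exp_lt_one_iff.2 (by norm_num))
  have hlneg : Real.log α < 0 := Real.log_neg hα0 hα1'
  have hLp : (0:ℝ) ≤ (-Real.log α) ^ (1 - s) := Real.rpow_nonneg (by linarith) _
  have hGm : AEStronglyMeasurable (fun p : E2 × E2 => |G p.1 p.2 α - g α|) volume := by
    apply Measurable.aestronglyMeasurable
    apply Measurable.abs
    apply Measurable.sub _ measurable_const
    simp only [G]
    exact measurable_const.mul (measurable_K0.comp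
      ((continuous_const.mul (continuous_fst.sub continuous_snd).norm).measurable))
  have hmeasInt : AEStronglyMeasurable
      (fun p : E2 × E2 => |V p.1| * |G p.1 p.2 α - g α| * |V p.2|) volume :=
    (hfst.mul hGm).mul hsnd
  have hFnn : (0:ℝ) ≤ ∫ p : E2 × E2, |V p.1| * |G p.1 p.2 α - g α| * |V p.2| :=
    integral_nonneg fun p => by positivity
  have hFeq : (∫ p : E2 × E2, |V p.1| * |G p.1 p.2 α - g α| * |V p.2|)
      = (∫⁻ p : E2 × E2,
        ENNReal.ofReal (|V p.1| * |G p.1 p.2 α - g α| * |V p.2|)).toReal :=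
    integral_eq_lintegral_of_nonneg_ae (ae_of_all _ fun p => by positivity) hmeasInt
  have hJ : (∫⁻ p : E2 × E2, ENNReal.ofReal (|V p.1| * |G p.1 p.2 α - g α| * |V p.2|))
      ≤ ENNReal.ofReal (c * (-Real.log α) ^ (1 - s)) := by
    have h1' : Kc ≤ ENNReal.ofReal (c / 2 * (-Real.log α) ^ (1 - s)) := by
      rw [ENNReal.le_ofReal_iff_toReal_le hKfin (mul_nonneg (by linarith) hLp)]
      exact hα2
    have h2' : ENNReal.ofReal (3 * (-Real.log α) ^ (1 - s)) * μ' (S n)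
        ≤ ENNReal.ofReal (c / 2 * (-Real.log α) ^ (1 - s)) := by
      calc ENNReal.ofReal (3 * (-Real.log α) ^ (1 - s)) * μ' (S n)
          ≤ ENNReal.ofReal (3 * (-Real.log α) ^ (1 - s)) * ENNReal.ofReal (c / 6) :=
            mul_le_mul_right hμn.le _
        _ = ENNReal.ofReal (3 * (-Real.log α) ^ (1 - s) * (c / 6)) :=
            (ENNReal.ofReal_mul (mul_nonneg (by norm_num) hLp)).symm
        _ = ENNReal.ofReal (c / 2 * (-Real.log α) ^ (1 - s)) := by
            congr 1; ring
    calc (∫⁻ p : E2 × E2, ENNReal.ofReal (|V p.1| * |G p.1 p.2 α - g α| * |V p.2|))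
        ≤ Kc + ENNReal.ofReal (3 * (-Real.log α) ^ (1 - s)) * μ' (S n) := by
          rw [hKcdef]
          exact key n hn3 α hα0 hαe hαn
      _ ≤ ENNReal.ofReal (c / 2 * (-Real.log α) ^ (1 - s))
          + ENNReal.ofReal (c / 2 * (-Real.log α) ^ (1 - s)) := add_le_add h1' h2'
      _ = ENNReal.ofReal (c * (-Real.log α) ^ (1 - s)) := by
          rw [← ENNReal.ofReal_add (mul_nonneg (by linarith) hLp)
            (mul_nonneg (by linarith) hLp)]
          congr 1; ring
  have hFb : (∫ p : E2 × E2, |V p.1| * |G p.1 p.2 α - g α| * |V p.2|)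
      ≤ c * (-Real.log α) ^ (1 - s) := by
    rw [hFeq]
    calc _ ≤ (ENNReal.ofReal (c * (-Real.log α) ^ (1 - s))).toReal :=
        ENNReal.toReal_mono ENNReal.ofReal_ne_top hJ
    _ = c * (-Real.log α) ^ (1 - s) := ENNReal.toReal_ofReal (mul_nonneg (by linarith) hLp)
  rw [Real.norm_eq_abs, abs_of_nonneg hFnn, Real.norm_eq_abs,
    abs_of_nonneg (Real.rpow_nonneg (abs_nonneg _) _), abs_of_neg hlneg]
  exact hFb
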